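/- Fix an integer 0 ≤ i ≤ k−1 and vertices u, v, x, y ∈ A_i such that d_G(u, v) < d_G(u, A_{i+1})/2 and d_G(x, y) < d_G(x, A_{i+1})/2. Suppose there exists a vertex z ∈ V lying simultaneously on a shortest u–v path and on a shortest x–y path, i.e., d_G(u, z) + d_G(z, v) = d_G(u, v) and d_G(x, z) + d_G(z, y) = d_G(x, y). Then either max{d_G(u, v), d_G(u, x), d_G(u, y)} < d_G(u, A_{i+1}), or max{d_G(x, y), d_G(x, u), d_G(x, v)} < d_G(x, A_{i+1}). -/

import Mathlib

/-!
Let `u–v` be the longer of the two shortest paths through `z`. Going through `z`,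
`d(u, x) ≤ d(u, z) + d(z, x) ≤ d(u, v) + d(x, y) ≤ 2 d(u, v) < d(u, A_{i+1})`, and likewise for `y`.
-/

open scoped ENNReal Classical

namespace ASP

variable {V : Type*}

/-- The total weight of a walk `p`, with edge weights given by `w`. -/
noncomputable def wWeight {G : SimpleGraph V} (w : V → V → ℝ≥0∞) {x y : V}
    (p : G.Walk x y) : ℝ≥0∞ :=
  (p.darts.map fun d => w d.toProd.1 d.toProd.2).sum

/-- The shortest-path distance between `x` and `y` in the graph `G` with edge weights `w`. -/
noncomputable def gdist (G : SimpleGraph V) (w : V → V → ℝ≥0∞) (x y : V) : ℝ≥0∞ :=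
  ⨅ p : G.Walk x y, wWeight w p

/-- The maximum edge weight on a walk `p` (zero for the empty walk). -/
noncomputable def maxW {G : SimpleGraph V} (w : V → V → ℝ≥0∞) {x y : V}
    (p : G.Walk x y) : ℝ≥0∞ :=
  (p.darts.map fun d => w d.toProd.1 d.toProd.2).foldr max 0

section Walks

variable {G : SimpleGraph V} {w : V → V → ℝ≥0∞}

lemma wWeight_append {a b c : V} (p : G.Walk a b) (q : G.Walk b c) :
    wWeight w (p.append q) = wWeight w p + wWeight w q := by
  simp [wWeight, SimpleGraph.Walk.darts_append]

lemma wWeight_reverse (hwsym : ∀ u v, G.Adj u v → w u v = w v u) {a b : V}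
    (p : G.Walk a b) : wWeight w p.reverse = wWeight w p := by
  unfold wWeight
  rw [SimpleGraph.Walk.darts_reverse, List.map_reverse, List.sum_reverse, List.map_map]
  congr 1
  refine List.map_congr_left fun d _ => ?_
  simp only [Function.comp_apply, SimpleGraph.Dart.symm_toProd, Prod.fst_swap, Prod.snd_swap]
  exact (hwsym d.toProd.1 d.toProd.2 d.adj).symm

lemma gdist_comm (hwsym : ∀ u v, G.Adj u v → w u v = w v u) (a b : V) :
    gdist G w a b = gdist G w b a := by
  have gdist_le_swap : ∀ s t : V, gdist G w s t ≤ gdist G w t s := fun s t =>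
    le_iInf fun p => (iInf_le _ p.reverse).trans (wWeight_reverse hwsym p).le
  exact (gdist_le_swap a b).antisymm (gdist_le_swap b a)

lemma gdist_triangle (a b c : V) : gdist G w a c ≤ gdist G w a b + gdist G w b c := by
  rw [gdist, gdist, gdist, ENNReal.iInf_add]
  simp only [ENNReal.add_iInf]
  exact le_iInf fun p => le_iInf fun q =>
    iInf_le_of_le (p.append q) (wWeight_append p q).le

end Walks

section Between

variable {d : V → V → ℝ≥0∞} (hcomm : ∀ a b, d a b = d b a)
  (htri : ∀ a b c, d a c ≤ d a b + d b c) {u v x y z : V}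

include hcomm htri in
lemma dist_le_add_of_between (hzuv : d u z + d z v = d u v) (hzxy : d x z + d z y = d x y) :
    d u x ≤ d u v + d x y ∧ d u y ≤ d u v + d x y := by
  have huz : d u z ≤ d u v := hzuv ▸ le_self_add
  have hxz : d x z ≤ d x y := hzxy ▸ le_self_add
  have hzy : d z y ≤ d x y := hzxy ▸ le_add_self
  constructor
  · calc d u x ≤ d u z + d z x := htri u z x
      _ = d u z + d x z := by rw [hcomm z x]
      _ ≤ d u v + d x y := add_le_add huz hxz
  · calc d u y ≤ d u z + d z y := htri u z y
      _ ≤ d u v + d x y := add_le_add huz hzy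

include hcomm htri in
lemma dist_lt_of_between_of_lt_half {r : ℝ≥0∞} (hzuv : d u z + d z v = d u v)
    (hzxy : d x z + d z y = d x y) (hle : d x y ≤ d u v) (hr : d u v < r / 2) :
    d u v < r ∧ d u x < r ∧ d u y < r := by
  have hsum : d u v + d x y < r :=
    calc d u v + d x y ≤ d u v * 2 := by rw [mul_two]; gcongr
      _ < r := ENNReal.mul_lt_of_lt_div hr
  obtain ⟨hux, huy⟩ := dist_le_add_of_between hcomm htri hzuv hzxy
  exact ⟨hr.trans_le ENNReal.half_le_self, hux.trans_lt hsum, huy.trans_lt hsum⟩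

end Between

theorem statement10_general (G : SimpleGraph V)
    (w : V → V → ℝ≥0∞) (hwsym : ∀ u v, G.Adj u v → w u v = w v u)
    (A : ℕ → Set V)
    (i : ℕ) (u v x y : V)
    (huv : ∀ a ∈ A (i + 1), gdist G w u v < gdist G w u a / 2)
    (hxy : ∀ a ∈ A (i + 1), gdist G w x y < gdist G w x a / 2)
    (z : V)
    (hzuv : gdist G w u z + gdist G w z v = gdist G w u v)
    (hzxy : gdist G w x z + gdist G w z y = gdist G w x y) :
    (∀ a ∈ A (i + 1), gdist G w u v < gdist G w u a ∧ gdist G w u x < gdist G w u a ∧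
        gdist G w u y < gdist G w u a) ∨
      (∀ a ∈ A (i + 1), gdist G w x y < gdist G w x a ∧ gdist G w x u < gdist G w x a ∧
        gdist G w x v < gdist G w x a) := by
  have hcomm := gdist_comm hwsym
  have htri := gdist_triangle (G := G) (w := w)
  rcases le_total (gdist G w x y) (gdist G w u v) with hle | hle
  · exact .inl fun a ha => dist_lt_of_between_of_lt_half hcomm htri hzuv hzxy hle (huv a ha)
  · exact .inr fun a ha => dist_lt_of_between_of_lt_half hcomm htri hzxy hzuv hle (hxy a ha)

/-- Lemma D.1: if `u, v, x, y ∈ A_i` with `d_G(u,v) < d_G(u, A_{i+1})/2` and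
`d_G(x,y) < d_G(x, A_{i+1})/2`, and some vertex `z` lies simultaneously on a shortest `u-v` path
and on a shortest `x-y` path, then either `max{d_G(u,v), d_G(u,x), d_G(u,y)} < d_G(u, A_{i+1})`
or `max{d_G(x,y), d_G(x,u), d_G(x,v)} < d_G(x, A_{i+1})` (the conditions involving the possibly
empty set `A_{i+1}` are expressed pointwise, matching the convention `d_G(u,∅) = ∞`). -/
theorem statement10 [Fintype V] (G : SimpleGraph V) (hconn : G.Connected)
    (w : V → V → ℝ≥0∞) (hwsym : ∀ u v, G.Adj u v → w u v = w v u)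
    (hwfin : ∀ u v, G.Adj u v → w u v ≠ ⊤)
    (k : ℕ) (hk : 1 ≤ k) (A : ℕ → Set V) (hA0 : A 0 = Set.univ)
    (hAnest : ∀ i, A (i + 1) ⊆ A i) (hAk : A k = ∅)
    (i : ℕ) (hi : i < k) (u v x y : V)
    (hu : u ∈ A i) (hv : v ∈ A i) (hx : x ∈ A i) (hy : y ∈ A i)
    (huv : ∀ a ∈ A (i + 1), gdist G w u v < gdist G w u a / 2)
    (hxy : ∀ a ∈ A (i + 1), gdist G w x y < gdist G w x a / 2)
    (z : V)
    (hzuv : gdist G w u z + gdist G w z v = gdist G w u v)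
    (hzxy : gdist G w x z + gdist G w z y = gdist G w x y) :
    (∀ a ∈ A (i + 1), gdist G w u v < gdist G w u a ∧ gdist G w u x < gdist G w u a ∧
        gdist G w u y < gdist G w u a) ∨
      (∀ a ∈ A (i + 1), gdist G w x y < gdist G w x a ∧ gdist G w x u < gdist G w x a ∧
        gdist G w x v < gdist G w x a) :=
  statement10_general G w hwsym A i u v x y huv hxy z hzuv hzxy

end ASP
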